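/- Let k ≥ 2 and r ≥ 2 be integers, let s be an integer with 2 ≤ s ≤ r, and let λ ∈ ℝ be a root of P^k_s. Then λ is an eigenvalue of the adjacency matrix of X_r^k and the λ-eigenspace of A(X_r^k) has dimension at least k^{r−s}·(k−1). -/

import Mathlib

open Polynomial

/-- Vertices of the rooted tree of depth `r` in which each vertex at depth `i < r`
has `b i` children: a vertex is a word assigning to each position `i < m ≤ r`
a letter in `Fin (b i)`; the empty word (`m = 0`) is the root, and the depth of a
vertex is its length `m`. -/
abbrev BVertex (b : ℕ → ℕ) (r : ℕ) := Σ m : Fin (r + 1), (i : Fin (m : ℕ)) → Fin (b i)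

/-- `y` is a child of `x`: the word `y` extends the word `x` by one letter. -/
def BExt {b : ℕ → ℕ} {r : ℕ} (x y : BVertex b r) : Prop :=
  ∃ h : (y.1 : ℕ) = (x.1 : ℕ) + 1,
    ∀ i : Fin (x.1 : ℕ), y.2 ⟨(i : ℕ), by have := i.isLt; omega⟩ = x.2 i

/-- Adjacency in the rooted tree: the parent/child relation. -/
def BAdj {b : ℕ → ℕ} {r : ℕ} (x y : BVertex b r) : Prop := BExt x y ∨ BExt y x

open Classical in
/-- Adjacency matrix of the rooted tree with branching sequence `b` and depth `r`. -/
noncomputable def BAdjMatrix (b : ℕ → ℕ) (r : ℕ) : Matrix (BVertex b r) (BVertex b r) ℝ :=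
  fun x y => if BAdj x y then 1 else 0

/-- `lam` is an eigenvalue of the adjacency matrix of the tree. -/
def IsAdjEigenvalue (b : ℕ → ℕ) (r : ℕ) (lam : ℝ) : Prop :=
  ∃ v : BVertex b r → ℝ, v ≠ 0 ∧ (BAdjMatrix b r).mulVec v = lam • v

/-- Dimension of the `lam`-eigenspace of the adjacency matrix of the tree. -/
noncomputable def adjEigDim (b : ℕ → ℕ) (r : ℕ) (lam : ℝ) : ℕ :=
  Module.finrank ℝ
    (LinearMap.ker ((BAdjMatrix b r).mulVecLin - lam • LinearMap.id))

/-- The generalized Fibonacci polynomials `P^k_n ∈ ℝ[x]`: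
`P^k_0 = 0`, `P^k_1 = 1`, `P^k_n = x·P^k_{n-1} − k·P^k_{n-2}`. -/
noncomputable def Ppoly (k : ℕ) : ℕ → Polynomial ℝ
  | 0 => 0
  | 1 => 1
  | n + 2 => X * Ppoly k (n + 1) - C (k : ℝ) * Ppoly k n

namespace TreeAux

open Classical

abbrev V (k r : ℕ) := BVertex (fun _ => k) r

noncomputable def pval (k : ℕ) (lam : ℝ) (n : ℕ) : ℝ := (Ppoly k n).eval lam

lemma pval_zero (k : ℕ) (lam : ℝ) : pval k lam 0 = 0 := by simp [pval, Ppoly]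

lemma pval_one (k : ℕ) (lam : ℝ) : pval k lam 1 = 1 := by simp [pval, Ppoly]

lemma pval_rec (k : ℕ) (lam : ℝ) (n : ℕ) :
    pval k lam (n + 2) = lam * pval k lam (n + 1) - k * pval k lam n := by
  simp [pval, Ppoly]

lemma pval_two (k : ℕ) (lam : ℝ) : pval k lam 2 = lam := by
  have h := pval_rec k lam 0
  rw [pval_zero, pval_one] at h
  simpa using h

lemma not_both {k r : ℕ} (x y : V k r) (h1 : BExt x y) (h2 : BExt y x) : False := by
  obtain ⟨e1, -⟩ := h1; obtain ⟨e2, -⟩ := h2; omega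

lemma mulVec_eq {k r : ℕ} (v : V k r → ℝ) (x : V k r) :
    (BAdjMatrix (fun _ => k) r).mulVec v x =
      (∑ y : V k r, if BExt x y then v y else 0)
        + (∑ y : V k r, if BExt y x then v y else 0) := by
  show (∑ y : V k r, BAdjMatrix (fun _ => k) r x y * v y) = _
  rw [← Finset.sum_add_distrib]
  apply Finset.sum_congr rfl
  intro y _
  by_cases h1 : BExt x y
  · rw [if_pos h1, if_neg (fun h2 => not_both x y h1 h2), add_zero,
      show BAdjMatrix (fun _ => k) r x y = 1 from if_pos (Or.inl h1), one_mul]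
  · by_cases h2 : BExt y x
    · rw [if_neg h1, if_pos h2, zero_add,
        show BAdjMatrix (fun _ => k) r x y = 1 from if_pos (Or.inr h2), one_mul]
    · rw [if_neg h1, if_neg h2, add_zero,
        show BAdjMatrix (fun _ => k) r x y = 0 from if_neg (fun h => h.elim h1 h2), zero_mul]

open Finset in
lemma sum_childExt {k r : ℕ} (m : ℕ) (hm : m < r + 1) (w : Fin m → Fin k) (f : V k r → ℝ) :
    (∑ y : V k r, if BExt (⟨⟨m, hm⟩, w⟩ : V k r) y then f y else 0)
      = if h : m + 1 < r + 1 then ∑ j : Fin k, f ⟨⟨m + 1, h⟩, Fin.snoc w j⟩ else 0 := by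
  rw [← Finset.sum_filter]
  split_ifs with h
  · have himg : (univ.filter fun y : V k r => BExt (⟨⟨m, hm⟩, w⟩ : V k r) y)
        = univ.image fun j : Fin k => (⟨⟨m + 1, h⟩, Fin.snoc w j⟩ : V k r) := by
      ext y
      simp only [mem_filter, mem_univ, true_and, mem_image]
      constructor
      · rintro ⟨h1, h2⟩
        obtain ⟨⟨ν, hν⟩, w'⟩ := y
        have hv : ν = m + 1 := h1
        subst hv
        refine ⟨w' ⟨m, Nat.lt_succ_self m⟩, ?_⟩
        have hw : (Fin.snoc w (w' ⟨m, Nat.lt_succ_self m⟩) : Fin (m + 1) → Fin k) = w' := by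
          funext i
          rcases Nat.lt_or_ge (i : ℕ) m with hi | hi
          · have hi2 : i = Fin.castSucc ⟨(i : ℕ), hi⟩ := Fin.ext rfl
            rw [hi2, Fin.snoc_castSucc]
            exact (h2 ⟨(i : ℕ), hi⟩).symm
          · have hiv : (i : ℕ) = m := by have := i.isLt; omega
            have hi2 : i = Fin.last m := Fin.ext (by simp [hiv])
            rw [hi2, Fin.snoc_last]
            rfl
        exact Sigma.ext rfl (heq_of_eq hw)
      · rintro ⟨j, rfl⟩
        refine ⟨rfl, fun i => ?_⟩
        show (Fin.snoc w j : Fin (m + 1) → Fin k) (Fin.castSucc i) = w i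
        rw [Fin.snoc_castSucc]
    rw [himg, Finset.sum_image]
    intro a _ b _ hab
    rw [Sigma.ext_iff] at hab
    have h2 := congrFun (eq_of_heq hab.2) (Fin.last m)
    simpa [Fin.snoc_last] using h2
  · have hemp : (univ.filter fun y : V k r => BExt (⟨⟨m, hm⟩, w⟩ : V k r) y) = ∅ := by
      ext y
      simp only [mem_filter, mem_univ, true_and, notMem_empty, iff_false]
      rintro ⟨h1, -⟩
      have h1' : (y.1 : ℕ) = m + 1 := h1
      have h2' := y.1.isLt
      omega
    rw [hemp, Finset.sum_empty]

open Finset in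
lemma sum_parentExt {k r : ℕ} (m : ℕ) (hm : m + 1 < r + 1) (w : Fin (m + 1) → Fin k)
    (f : V k r → ℝ) :
    (∑ y : V k r, if BExt y (⟨⟨m + 1, hm⟩, w⟩ : V k r) then f y else 0)
      = f ⟨⟨m, by omega⟩, fun i => w ⟨(i : ℕ), Nat.lt_succ_of_lt i.isLt⟩⟩ := by
  rw [Finset.sum_eq_single
    (⟨⟨m, by omega⟩, fun i => w ⟨(i : ℕ), Nat.lt_succ_of_lt i.isLt⟩⟩ : V k r)]
  · rw [if_pos]
    exact ⟨rfl, fun i => rfl⟩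
  · intro y _ hy
    rw [if_neg]
    intro hb
    apply hy
    obtain ⟨⟨ν, hν⟩, w'⟩ := y
    obtain ⟨h1, h2⟩ := hb
    have h1' : m + 1 = ν + 1 := h1
    have hv : ν = m := by omega
    subst hv
    refine Sigma.ext rfl (heq_of_eq ?_)
    funext i
    exact (h2 i).symm
  · intro h; exact absurd (Finset.mem_univ _) h

lemma sum_parentExt_root {k r : ℕ} (hm : 0 < r + 1) (w : Fin 0 → Fin k) (f : V k r → ℝ) :
    (∑ y : V k r, if BExt y (⟨⟨0, hm⟩, w⟩ : V k r) then f y else 0) = 0 := by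
  apply Finset.sum_eq_zero
  intro y _
  rw [if_neg]
  rintro ⟨h1, -⟩
  have h1' : (0 : ℕ) = (y.1 : ℕ) + 1 := h1
  omega

noncomputable def theVec (k r T : ℕ) (lam : ℝ) (C : ((i : Fin T) → Fin k) → ℝ) :
    V k r → ℝ :=
  fun x => if h : T ≤ (x.1 : ℕ) then
      C (fun i => x.2 ⟨(i : ℕ), lt_of_lt_of_le i.isLt h⟩) * pval k lam (r + 1 - (x.1 : ℕ))
    else 0

lemma theVec_apply_pos (k r T : ℕ) (lam : ℝ) (C : ((i : Fin T) → Fin k) → ℝ)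
    (m : ℕ) (hm : m < r + 1) (w : Fin m → Fin k) (h : T ≤ m) :
    theVec k r T lam C ⟨⟨m, hm⟩, w⟩
      = C (fun i => w ⟨(i : ℕ), lt_of_lt_of_le i.isLt h⟩) * pval k lam (r + 1 - m) := by
  show (if h : T ≤ m then
      C (fun i => w ⟨(i : ℕ), lt_of_lt_of_le i.isLt h⟩) * pval k lam (r + 1 - m)
    else 0) = _
  rw [dif_pos h]

lemma theVec_apply_neg (k r T : ℕ) (lam : ℝ) (C : ((i : Fin T) → Fin k) → ℝ)
    (m : ℕ) (hm : m < r + 1) (w : Fin m → Fin k) (h : ¬ T ≤ m) :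
    theVec k r T lam C ⟨⟨m, hm⟩, w⟩ = 0 := by
  show (if h : T ≤ m then
      C (fun i => w ⟨(i : ℕ), lt_of_lt_of_le i.isLt h⟩) * pval k lam (r + 1 - m)
    else 0) = _
  rw [dif_neg h]

noncomputable def Lmap (k r T : ℕ) (lam : ℝ) :
    (((i : Fin T) → Fin k) → ℝ) →ₗ[ℝ] (V k r → ℝ) where
  toFun := theVec k r T lam
  map_add' C D := by
    funext x
    by_cases h : T ≤ (x.1 : ℕ) <;> simp [theVec, h, add_mul]
  map_smul' a C := by
    funext x
    by_cases h : T ≤ (x.1 : ℕ) <;> simp [theVec, h, mul_assoc]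

noncomputable def Smap (k t : ℕ) :
    (((i : Fin (t + 1)) → Fin k) → ℝ) →ₗ[ℝ] (((i : Fin t) → Fin k) → ℝ) where
  toFun C := fun u => ∑ j : Fin k, C (Fin.snoc u j)
  map_add' C D := by funext u; simp [Finset.sum_add_distrib]
  map_smul' a C := by funext u; simp [Finset.mul_sum]

lemma eigen_eq (k r s : ℕ) (hk : 2 ≤ k) (hs2 : 2 ≤ s) (hsr : s ≤ r) (lam : ℝ)
    (hroot : pval k lam s = 0)
    (C : ((i : Fin (r - s + 2)) → Fin k) → ℝ)
    (hC : ∀ u : (i : Fin (r - s + 1)) → Fin k, ∑ j : Fin k, C (Fin.snoc u j) = 0) :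
    (BAdjMatrix (fun _ => k) r).mulVec (theVec k r (r - s + 2) lam C)
      = lam • theVec k r (r - s + 2) lam C := by
  funext x
  obtain ⟨⟨m, hm⟩, w⟩ := x
  rw [Pi.smul_apply, smul_eq_mul, mulVec_eq, sum_childExt]
  cases m with
  | zero =>
    rw [sum_parentExt_root]
    have h1 : (0 : ℕ) + 1 < r + 1 := by omega
    rw [dif_pos h1]
    have e1 : ¬ (r - s + 2 ≤ 0 + 1) := by omega
    have e0 : ¬ (r - s + 2 ≤ 0) := by omega
    rw [theVec_apply_neg _ _ _ _ _ _ _ _ e0]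
    rw [Finset.sum_congr rfl (fun j _ => theVec_apply_neg k r (r - s + 2) lam C (0 + 1) h1 (Fin.snoc w j) e1)]
    simp
  | succ n =>
    rw [sum_parentExt]
    rcases lt_trichotomy (n + 1 + 1) (r - s + 2) with hA | hB | hC0
    · -- all values vanish
      have e1 : ¬ (r - s + 2 ≤ n + 1 + 1) := by omega
      have e2 : ¬ (r - s + 2 ≤ n) := by omega
      have e3 : ¬ (r - s + 2 ≤ n + 1) := by omega
      rw [theVec_apply_neg _ _ _ _ _ _ _ _ e3, theVec_apply_neg _ _ _ _ _ _ _ _ e2]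
      split_ifs with h
      · rw [Finset.sum_congr rfl (fun j _ => theVec_apply_neg k r (r - s + 2) lam C (n + 1 + 1) h (Fin.snoc w j) e1)]
        simp
      · simp
    · -- boundary case : depth n+1 = r-s+1
      have hn : n = r - s := by omega
      subst hn
      have hcr : r - s + 1 + 1 < r + 1 := by omega
      have e3 : ¬ (r - s + 2 ≤ r - s + 1) := by omega
      have e2 : ¬ (r - s + 2 ≤ r - s) := by omega
      rw [theVec_apply_neg _ _ _ _ _ _ _ _ e3, theVec_apply_neg _ _ _ _ _ _ _ _ e2,
        dif_pos hcr]
      have hT : r - s + 2 ≤ r - s + 1 + 1 := le_refl _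
      rw [Finset.sum_congr rfl
        (fun j _ => theVec_apply_pos k r (r - s + 2) lam C (r - s + 1 + 1) hcr (Fin.snoc w j) hT)]
      have hsum : (∑ j : Fin k,
          C (fun i => (Fin.snoc w j : Fin (r - s + 1 + 1) → Fin k)
              ⟨(i : ℕ), lt_of_lt_of_le i.isLt hT⟩)
            * pval k lam (r + 1 - (r - s + 1 + 1)))
          = (∑ j : Fin k, C (Fin.snoc w j)) * pval k lam (r + 1 - (r - s + 1 + 1)) := by
        rw [Finset.sum_mul]
      rw [hsum, hC w, zero_mul, add_zero, mul_zero]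
    · -- main region : r - s + 2 ≤ n + 1
      have hC2 : r - s + 2 ≤ n + 1 := by omega
      have hx : theVec k r (r - s + 2) lam C ⟨⟨n + 1, hm⟩, w⟩
          = C (fun i => w ⟨(i : ℕ), lt_of_lt_of_le i.isLt hC2⟩) * pval k lam (r + 1 - (n + 1)) :=
        theVec_apply_pos k r (r - s + 2) lam C (n + 1) hm w hC2
      rw [hx]
      set c := C (fun i => w ⟨(i : ℕ), lt_of_lt_of_le i.isLt hC2⟩) with hc
      -- child sum
      have hchild : (if h : n + 1 + 1 < r + 1 then
          ∑ j : Fin k, theVec k r (r - s + 2) lam C ⟨⟨n + 1 + 1, h⟩, Fin.snoc w j⟩ else 0)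
          = if n + 1 + 1 < r + 1 then (k : ℝ) * (c * pval k lam (r + 1 - (n + 1 + 1))) else 0 := by
        split_ifs with h
        · have hT : r - s + 2 ≤ n + 1 + 1 := by omega
          rw [Finset.sum_congr rfl
            (fun j _ => theVec_apply_pos k r (r - s + 2) lam C (n + 1 + 1) h (Fin.snoc w j) hT)]
          have heach : ∀ j : Fin k,
              C (fun i => (Fin.snoc w j : Fin (n + 1 + 1) → Fin k)
                  ⟨(i : ℕ), lt_of_lt_of_le i.isLt hT⟩) = c := by
            intro j
            rw [hc]
            congr 1
            funext i
            show (Fin.snoc w j : Fin (n + 1 + 1) → Fin k)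
                (Fin.castSucc ⟨(i : ℕ), lt_of_lt_of_le i.isLt hC2⟩) = _
            rw [Fin.snoc_castSucc]
          rw [Finset.sum_congr rfl (fun j _ => by rw [heach j])]
          rw [Finset.sum_const, Finset.card_univ, Fintype.card_fin, nsmul_eq_mul]
        · rfl
      rw [hchild]
      -- parent value
      have hparent : theVec k r (r - s + 2) lam C
          ⟨⟨n, Nat.lt_of_succ_lt hm⟩, fun i => w ⟨(i : ℕ), Nat.lt_succ_of_lt i.isLt⟩⟩
          = if r - s + 2 ≤ n then c * pval k lam (r + 1 - n) else 0 := by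
        split_ifs with h
        · rw [theVec_apply_pos k r (r - s + 2) lam C n (Nat.lt_of_succ_lt hm) _ h]
        · exact theVec_apply_neg k r (r - s + 2) lam C n (Nat.lt_of_succ_lt hm) _ h
      rw [show (⟨⟨n, by omega⟩, fun i => w ⟨(i : ℕ), Nat.lt_succ_of_lt i.isLt⟩⟩ : V k r)
          = ⟨⟨n, Nat.lt_of_succ_lt hm⟩, fun i => w ⟨(i : ℕ), Nat.lt_succ_of_lt i.isLt⟩⟩ from rfl,
        hparent]
      -- now a scalar identity
      by_cases hpar : r - s + 2 ≤ n
      · rw [if_pos hpar]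
        by_cases hch : n + 1 + 1 < r + 1
        · rw [if_pos hch]
          have e1 : r + 1 - n = (r - (n + 1)) + 2 := by omega
          have e2 : r + 1 - (n + 1) = (r - (n + 1)) + 1 := by omega
          have e3 : r + 1 - (n + 1 + 1) = r - (n + 1) := by omega
          rw [e1, e2, e3, pval_rec]
          ring
        · rw [if_neg hch]
          have hn : n + 1 = r := by omega
          have e1 : r + 1 - n = 2 := by omega
          have e2 : r + 1 - (n + 1) = 1 := by omega
          rw [e1, e2, pval_two, pval_one]
          ring
      · rw [if_neg hpar]
        have hn : n + 1 = r - s + 2 := by omega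
        by_cases hch : n + 1 + 1 < r + 1
        · rw [if_pos hch]
          have e2 : r + 1 - (n + 1) = s - 1 := by omega
          have e3 : r + 1 - (n + 1 + 1) = s - 2 := by omega
          have hrec := pval_rec k lam (s - 2)
          rw [show s - 2 + 2 = s by omega, show s - 2 + 1 = s - 1 by omega, hroot] at hrec
          rw [e2, e3]
          linear_combination c * hrec
        · rw [if_neg hch]
          have hs2' : s = 2 := by omega
          subst hs2'
          have e2 : r + 1 - (n + 1) = 1 := by omega
          have hlam : lam = 0 := by rw [← pval_two k lam]; exact hroot
          rw [e2, pval_one, hlam]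
          ring

lemma Lmap_injective (k r T : ℕ) (hk : 0 < k) (hT : T ≤ r) (lam : ℝ) :
    Function.Injective (Lmap k r T lam) := by
  intro C D hCD
  funext u
  have hx : theVec k r T lam C
        ⟨⟨r, Nat.lt_succ_self r⟩,
          fun i => if hh : (i : ℕ) < T then u ⟨(i : ℕ), hh⟩ else ⟨0, hk⟩⟩
      = theVec k r T lam D
        ⟨⟨r, Nat.lt_succ_self r⟩,
          fun i => if hh : (i : ℕ) < T then u ⟨(i : ℕ), hh⟩ else ⟨0, hk⟩⟩ :=
    congrFun hCD _
  rw [theVec_apply_pos k r T lam C r (Nat.lt_succ_self r) _ hT,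
    theVec_apply_pos k r T lam D r (Nat.lt_succ_self r) _ hT,
    show r + 1 - r = 1 by omega, pval_one, mul_one, mul_one] at hx
  have harg : (fun i : Fin T =>
      (fun i' : Fin r => if hh : (i' : ℕ) < T then u ⟨(i' : ℕ), hh⟩ else ⟨0, hk⟩)
        ⟨(i : ℕ), lt_of_lt_of_le i.isLt hT⟩) = u := by
    funext i
    show (if hh : (i : ℕ) < T then u ⟨(i : ℕ), hh⟩ else ⟨0, hk⟩) = u i
    rw [dif_pos i.isLt]
  rw [harg] at hx
  exact hx

lemma Smap_surjective (k t : ℕ) (hk : 0 < k) : Function.Surjective (Smap k t) := by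
  intro g
  refine ⟨fun wv => g (Fin.init wv) / k, ?_⟩
  funext u
  show (∑ j : Fin k, g (Fin.init (α := fun _ => Fin k) (Fin.snoc u j)) / k) = g u
  simp only [Fin.init_snoc]
  rw [Finset.sum_const, Finset.card_univ, Fintype.card_fin, nsmul_eq_mul]
  have : (k : ℝ) ≠ 0 := by positivity
  field_simp

lemma card_words (k n : ℕ) : Fintype.card ((i : Fin n) → Fin k) = k ^ n := by
  simp [Fintype.card_pi]

lemma finrank_ker_Smap (k t : ℕ) (hk : 0 < k) :
    Module.finrank ℝ (LinearMap.ker (Smap k t)) + k ^ t = k ^ (t + 1) := by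
  have h := LinearMap.finrank_range_add_finrank_ker (Smap k t)
  rw [LinearMap.range_eq_top.mpr (Smap_surjective k t hk), finrank_top] at h
  have e1 : Module.finrank ℝ (((i : Fin t) → Fin k) → ℝ) = k ^ t := by
    rw [Module.finrank_fintype_fun_eq_card, card_words]
  have e2 : Module.finrank ℝ (((i : Fin (t + 1)) → Fin k) → ℝ) = k ^ (t + 1) := by
    rw [Module.finrank_fintype_fun_eq_card, card_words]
  rw [e1, e2] at h
  omega

end TreeAux

/-- Let `k ≥ 2`, `r ≥ 2`, `2 ≤ s ≤ r`, and let `lam` be a root of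
`P^k_s`. Then `lam` is an eigenvalue of the adjacency matrix of `X_r^k` and the
`lam`-eigenspace has dimension at least `k^{r−s}·(k−1)`. -/
theorem eigenspace_of_root_Ps (k r s : ℕ) (hk : 2 ≤ k) (hr : 2 ≤ r)
    (hs2 : 2 ≤ s) (hsr : s ≤ r) (lam : ℝ) (hroot : (Ppoly k s).IsRoot lam) :
    IsAdjEigenvalue (fun _ => k) r lam ∧
      k ^ (r - s) * (k - 1) ≤ adjEigDim (fun _ => k) r lam := by
  classical
  have hk0 : 0 < k := by omega
  have hroot' : TreeAux.pval k lam s = 0 := hroot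
  have hkerdef : ∀ vfun : BVertex (fun _ => k) r → ℝ,
      vfun ∈ LinearMap.ker ((BAdjMatrix (fun _ => k) r).mulVecLin - lam • LinearMap.id)
        ↔ (BAdjMatrix (fun _ => k) r).mulVec vfun = lam • vfun := by
    intro vfun
    rw [LinearMap.mem_ker, LinearMap.sub_apply, Matrix.mulVecLin_apply,
      LinearMap.smul_apply, LinearMap.id_apply, sub_eq_zero]
  have hmem : ∀ C : ((i : Fin (r - s + 2)) → Fin k) → ℝ,
      (∀ u : (i : Fin (r - s + 1)) → Fin k, ∑ j : Fin k, C (Fin.snoc u j) = 0) →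
      TreeAux.theVec k r (r - s + 2) lam C ∈
        LinearMap.ker ((BAdjMatrix (fun _ => k) r).mulVecLin - lam • LinearMap.id) := by
    intro C hCc
    rw [hkerdef]
    exact TreeAux.eigen_eq k r s hk hs2 hsr lam hroot' C hCc
  set Φ : LinearMap.ker (TreeAux.Smap k (r - s + 1)) →ₗ[ℝ]
      LinearMap.ker ((BAdjMatrix (fun _ => k) r).mulVecLin - lam • LinearMap.id) :=
    LinearMap.codRestrict _
      ((TreeAux.Lmap k r (r - s + 2) lam).comp (Submodule.subtype _))
      (fun c => hmem c.1 (fun u => congrFun (LinearMap.mem_ker.mp c.2) u)) with hPhi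
  have hPhiInj : Function.Injective Φ := by
    intro a b hab
    have h1 : (TreeAux.Lmap k r (r - s + 2) lam) a.1
        = (TreeAux.Lmap k r (r - s + 2) lam) b.1 := congrArg Subtype.val hab
    exact Subtype.ext (TreeAux.Lmap_injective k r (r - s + 2) hk0 (by omega) lam h1)
  have hrank : Module.finrank ℝ (LinearMap.ker (TreeAux.Smap k (r - s + 1)))
      ≤ Module.finrank ℝ
        (LinearMap.ker ((BAdjMatrix (fun _ => k) r).mulVecLin - lam • LinearMap.id)) :=
    LinearMap.finrank_le_finrank_of_injective hPhiInj
  have hker := TreeAux.finrank_ker_Smap k (r - s + 1) hk0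
  have hlow : k ^ (r - s) * (k - 1)
      ≤ Module.finrank ℝ (LinearMap.ker (TreeAux.Smap k (r - s + 1))) := by
    have e1 : k ^ (r - s + 1) = k ^ (r - s) * k := pow_succ k (r - s)
    have e2 : k ^ (r - s + 1 + 1) = k ^ (r - s) * k * k := by rw [pow_succ, e1]
    have ha : 0 < k ^ (r - s) := Nat.pow_pos hk0
    rw [e1, e2] at hker
    set F := Module.finrank ℝ (LinearMap.ker (TreeAux.Smap k (r - s + 1)))
    set a := k ^ (r - s)
    have hb : ∃ b : ℕ, k = b + 2 := ⟨k - 2, by omega⟩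
    obtain ⟨b, rfl⟩ := hb
    have hsub : b + 2 - 1 = b + 1 := by omega
    rw [hsub]
    nlinarith [hker, ha]
  have hdimeq : adjEigDim (fun _ => k) r lam
      = Module.finrank ℝ
        (LinearMap.ker ((BAdjMatrix (fun _ => k) r).mulVecLin - lam • LinearMap.id)) := rfl
  have hfinal : k ^ (r - s) * (k - 1) ≤ adjEigDim (fun _ => k) r lam := by
    rw [hdimeq]; exact le_trans hlow hrank
  refine ⟨?_, hfinal⟩
  have hpos : 0 < Module.finrank ℝ
      (LinearMap.ker ((BAdjMatrix (fun _ => k) r).mulVecLin - lam • LinearMap.id)) := by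
    have h1 : 0 < k ^ (r - s) * (k - 1) :=
      Nat.mul_pos (Nat.pow_pos hk0) (by omega)
    omega
  have : Nontrivial
      (LinearMap.ker ((BAdjMatrix (fun _ => k) r).mulVecLin - lam • LinearMap.id)) :=
    Module.finrank_pos_iff.mp hpos
  obtain ⟨v, hv⟩ := exists_ne
    (0 : LinearMap.ker ((BAdjMatrix (fun _ => k) r).mulVecLin - lam • LinearMap.id))
  exact ⟨v.1, fun h0 => hv (Subtype.ext h0), (hkerdef v.1).mp v.2⟩
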